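/- For every n ≥ 0 and every real y > 0, Σ_{k≥0} p(n,k)·y^k = (1/(2^{n+1}·√(1+8y))) · [ 4y·(1+√(1+8y))^n − 4y·(1−√(1+8y))^n + (1+√(1+8y))^{n+1} − (1−√(1+8y))^{n+1} ]. -/

import Mathlib

open scoped Classical

/-- A finite set `S` of positive integers is Kentucky-2 legal if for all distinct
`i, j ∈ S` we have `|⌈i/2⌉ - ⌈j/2⌉| ≥ 2`. -/
def KLegal (S : Finset ℕ) : Prop :=
  (∀ i ∈ S, 1 ≤ i) ∧
  ∀ i ∈ S, ∀ j ∈ S, i ≠ j → 2 ≤ |(((i + 1) / 2 : ℕ) : ℤ) - (((j + 1) / 2 : ℕ) : ℤ)|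

/-- `p n k` is the number of Kentucky-2 legal subsets of `{1,…,2n}` of cardinality `k`. -/
noncomputable def p (n k : ℕ) : ℕ :=
  ((Finset.Icc 1 (2 * n)).powerset.filter (fun S => KLegal S ∧ S.card = k)).card

lemma klegal_subset {S T : Finset ℕ} (h : T ⊆ S) (hS : KLegal S) : KLegal T :=
  ⟨fun i hi => hS.1 i (h hi), fun i hi j hj hij => hS.2 i (h hi) j (h hj) hij⟩

lemma klegal_empty : KLegal ∅ := by
  constructor <;> simp

lemma p_zero (n : ℕ) : p n 0 = 1 := by
  unfold p
  have : ((Finset.Icc 1 (2 * n)).powerset.filter (fun S => KLegal S ∧ S.card = 0)) = {∅} := by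
    ext S
    simp only [Finset.mem_filter, Finset.mem_powerset, Finset.mem_singleton, Finset.card_eq_zero]
    constructor
    · rintro ⟨-, -, h⟩; exact h
    · rintro rfl; exact ⟨Finset.empty_subset _, klegal_empty, rfl⟩
  rw [this]; rfl

lemma p_eq_zero {n k : ℕ} (h : n < k) : p n k = 0 := by
  unfold p
  rw [Finset.card_eq_zero, Finset.filter_eq_empty_iff]
  rintro S hS ⟨hL, hcard⟩
  rw [Finset.mem_powerset] at hS
  have hinj : Set.InjOn (fun i => (i + 1) / 2) S := by
    intro i hi j hj hij
    by_contra hne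
    have h2 := hL.2 i hi j hj hne
    rw [le_abs] at h2
    simp only at hij
    omega
  have himg : Finset.image (fun i => (i + 1) / 2) S ⊆ Finset.Icc 1 n := by
    intro x hx
    simp only [Finset.mem_image] at hx
    obtain ⟨i, hi, rfl⟩ := hx
    have := hS hi
    rw [Finset.mem_Icc] at this ⊢
    omega
  have := Finset.card_le_card himg
  rw [Finset.card_image_of_injOn hinj, Nat.card_Icc] at this
  omega

lemma p_one_one : p 1 1 = 2 := by
  unfold p
  have : ((Finset.Icc 1 (2 * 1)).powerset.filter (fun S => KLegal S ∧ S.card = 1))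
      = {{1}, {2}} := by
    ext S
    simp only [Finset.mem_filter, Finset.mem_powerset, Finset.mem_insert, Finset.mem_singleton]
    constructor
    · rintro ⟨hsub, -, hcard⟩
      obtain ⟨a, rfl⟩ := Finset.card_eq_one.mp hcard
      have := hsub (Finset.mem_singleton_self a)
      rw [Finset.mem_Icc] at this
      obtain ⟨h1, h2⟩ := this
      interval_cases a
      · left; rfl
      · right; rfl
    · rintro (rfl | rfl)
      · refine ⟨by decide, ⟨by decide, ?_⟩, rfl⟩
        intro i hi j hj hij
        simp only [Finset.mem_singleton] at hi hj
        omega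
      · refine ⟨by decide, ⟨by decide, ?_⟩, rfl⟩
        intro i hi j hj hij
        simp only [Finset.mem_singleton] at hi hj
        omega
  rw [this]
  decide

/-- If a legal set `S ⊆ Icc 1 (2n+4)` contains `m ∈ {2n+3, 2n+4}`, then every other
element is ≤ 2n. -/
lemma key_bound {n m : ℕ} {S : Finset ℕ} (hm : m = 2 * n + 3 ∨ m = 2 * n + 4)
    (hS : S ⊆ Finset.Icc 1 (2 * (n + 2))) (hL : KLegal S) (hmS : m ∈ S)
    {j : ℕ} (hj : j ∈ S) (hne : j ≠ m) : j ∈ Finset.Icc 1 (2 * n) := by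
  have h1 := hS hj
  rw [Finset.mem_Icc] at h1 ⊢
  have h2 := hL.2 j hj m hmS hne
  rw [le_abs] at h2
  omega

/-- Inserting `m ∈ {2n+3, 2n+4}` into a legal subset of `Icc 1 (2n)` keeps it legal. -/
lemma key_insert {n m : ℕ} {T : Finset ℕ} (hm : m = 2 * n + 3 ∨ m = 2 * n + 4)
    (hT : T ⊆ Finset.Icc 1 (2 * n)) (hL : KLegal T) : KLegal (insert m T) := by
  constructor
  · intro i hi
    rcases Finset.mem_insert.mp hi with rfl | hi
    · omega
    · exact hL.1 i hi
  · intro i hi j hj hij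
    rcases Finset.mem_insert.mp hi with hi' | hi' <;>
      rcases Finset.mem_insert.mp hj with hj' | hj'
    · omega
    · have := Finset.mem_Icc.mp (hT hj')
      rw [le_abs]; omega
    · have := Finset.mem_Icc.mp (hT hi')
      rw [le_abs]; omega
    · exact hL.2 i hi' j hj' hij

lemma not_mem_of_subset_Icc {n m : ℕ} {T : Finset ℕ} (hm : 2 * n < m)
    (hT : T ⊆ Finset.Icc 1 (2 * n)) : m ∉ T := by
  intro h
  have := hT h
  rw [Finset.mem_Icc] at this
  omega

lemma card_top (n k m : ℕ) (hm : m = 2 * n + 3 ∨ m = 2 * n + 4) :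
    (((Finset.Icc 1 (2 * (n + 2))).powerset.filter
        (fun S => KLegal S ∧ S.card = k + 1)).filter (fun S => m ∈ S)).card = p n k := by
  unfold p
  refine Finset.card_bij' (fun S _ => S.erase m) (fun T _ => insert m T) ?_ ?_ ?_ ?_
  · -- erase lands in target
    intro S hS
    simp only [Finset.mem_filter, Finset.mem_powerset] at hS ⊢
    obtain ⟨⟨hsub, hL, hcard⟩, hmem⟩ := hS
    refine ⟨?_, klegal_subset (Finset.erase_subset _ _) hL, ?_⟩
    · intro x hx
      rw [Finset.mem_erase] at hx
      exact key_bound hm hsub hL hmem hx.2 hx.1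
    · rw [Finset.card_erase_of_mem hmem, hcard]
      omega
  · -- insert lands in source
    intro T hT
    simp only [Finset.mem_filter, Finset.mem_powerset] at hT ⊢
    obtain ⟨hsub, hL, hcard⟩ := hT
    refine ⟨⟨?_, key_insert hm hsub hL, ?_⟩, Finset.mem_insert_self _ _⟩
    · intro x hx
      rcases Finset.mem_insert.mp hx with rfl | hx
      · rw [Finset.mem_Icc]; omega
      · have := hsub hx; rw [Finset.mem_Icc] at this ⊢; omega
    · rw [Finset.card_insert_of_notMem (not_mem_of_subset_Icc (m := m) (by omega) hsub), hcard]
  · intro S hS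
    simp only [Finset.mem_filter] at hS
    exact Finset.insert_erase hS.2
  · intro T hT
    simp only [Finset.mem_filter, Finset.mem_powerset] at hT
    exact Finset.erase_insert (not_mem_of_subset_Icc (by omega) hT.1)

lemma p_rec (n k : ℕ) : p (n + 2) (k + 1) = p (n + 1) (k + 1) + 2 * p n k := by
  classical
  set A := (Finset.Icc 1 (2 * (n + 2))).powerset.filter
      (fun S => KLegal S ∧ S.card = k + 1) with hA
  have hsplit : A.card =
      (A.filter (fun S => (2 * n + 3) ∉ S ∧ (2 * n + 4) ∉ S)).card +
      (A.filter (fun S => ¬((2 * n + 3) ∉ S ∧ (2 * n + 4) ∉ S))).card :=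
    (Finset.card_filter_add_card_filter_not _).symm
  have h1 : (A.filter (fun S => (2 * n + 3) ∉ S ∧ (2 * n + 4) ∉ S)) =
      (Finset.Icc 1 (2 * (n + 1))).powerset.filter (fun S => KLegal S ∧ S.card = k + 1) := by
    ext S
    simp only [hA, Finset.mem_filter, Finset.mem_powerset]
    constructor
    · rintro ⟨⟨hsub, h⟩, h3, h4⟩
      refine ⟨?_, h⟩
      intro x hx
      have := hsub hx
      rw [Finset.mem_Icc] at this ⊢
      rcases Nat.lt_or_ge x (2 * n + 3) with h' | h'
      · omega
      · exfalso
        rcases Nat.lt_or_ge x (2 * n + 4) with h'' | h''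
        · have hx3 : x = 2 * n + 3 := by omega
          exact h3 (hx3 ▸ hx)
        · have hx4 : x = 2 * n + 4 := by omega
          exact h4 (hx4 ▸ hx)
    · rintro ⟨hsub, h⟩
      have hb : ∀ x ∈ S, x ≤ 2 * n + 2 := by
        intro x hx; have := hsub hx; rw [Finset.mem_Icc] at this; omega
      refine ⟨⟨?_, h⟩, fun hc => by have := hb _ hc; omega,
        fun hc => by have := hb _ hc; omega⟩
      intro x hx
      have := hsub hx
      rw [Finset.mem_Icc] at this ⊢
      omega
  have h2 : (A.filter (fun S => ¬((2 * n + 3) ∉ S ∧ (2 * n + 4) ∉ S))) =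
      (A.filter (fun S => (2 * n + 3) ∈ S)) ∪ (A.filter (fun S => (2 * n + 4) ∈ S)) := by
    rw [← Finset.filter_or]
    apply Finset.filter_congr
    intro S _
    constructor
    · intro h; by_contra hc; push_neg at hc; exact h ⟨hc.1, hc.2⟩
    · rintro (h | h) ⟨h3, h4⟩
      · exact h3 h
      · exact h4 h
  have hdisj : Disjoint (A.filter (fun S => (2 * n + 3) ∈ S))
      (A.filter (fun S => (2 * n + 4) ∈ S)) := by
    rw [Finset.disjoint_left]
    intro S hS hS'
    simp only [hA, Finset.mem_filter] at hS hS'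
    have hL := hS.1.2.1
    have := hL.2 (2 * n + 3) hS.2 (2 * n + 4) hS'.2 (by omega)
    rw [le_abs] at this
    omega
  have h3 := card_top n k (2 * n + 3) (Or.inl rfl)
  have h4 := card_top n k (2 * n + 4) (Or.inr rfl)
  show A.card = _
  rw [hsplit, h1, h2, Finset.card_union_of_disjoint hdisj, h3, h4]
  unfold p
  ring

noncomputable def F (y : ℝ) (n : ℕ) : ℝ :=
  (1 / (2 ^ (n + 1) * Real.sqrt (1 + 8 * y))) *
    (4 * y * (1 + Real.sqrt (1 + 8 * y)) ^ n - 4 * y * (1 - Real.sqrt (1 + 8 * y)) ^ n +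
      (1 + Real.sqrt (1 + 8 * y)) ^ (n + 1) - (1 - Real.sqrt (1 + 8 * y)) ^ (n + 1))

lemma F_eq (y : ℝ) (hy : 0 < y) (n : ℕ) :
    F y n = (((1 + Real.sqrt (1 + 8 * y)) / 2) ^ (n + 1) -
        ((1 - Real.sqrt (1 + 8 * y)) / 2) ^ (n + 1) +
        2 * y * (((1 + Real.sqrt (1 + 8 * y)) / 2) ^ n -
          ((1 - Real.sqrt (1 + 8 * y)) / 2) ^ n)) / Real.sqrt (1 + 8 * y) := by
  unfold F
  set s := Real.sqrt (1 + 8 * y) with hsdef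
  have h8 : (0:ℝ) < 1 + 8 * y := by linarith
  have hs0 : s ≠ 0 := ne_of_gt (Real.sqrt_pos.mpr h8)
  have e1 : ∀ m : ℕ, (1 + s) ^ m = 2 ^ m * ((1 + s) / 2) ^ m := by
    intro m
    rw [← mul_pow]
    ring_nf
  have e2 : ∀ m : ℕ, (1 - s) ^ m = 2 ^ m * ((1 - s) / 2) ^ m := by
    intro m
    rw [← mul_pow]
    ring_nf
  rw [e1 n, e1 (n+1), e2 n, e2 (n+1)]
  have h2 : (2:ℝ) ^ (n+1) ≠ 0 := by positivity
  field_simp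
  ring

lemma F_zero (y : ℝ) (hy : 0 < y) : F y 0 = 1 := by
  rw [F_eq y hy 0]
  have h8 : (0:ℝ) < 1 + 8 * y := by linarith
  have hs0 : Real.sqrt (1 + 8 * y) ≠ 0 := ne_of_gt (Real.sqrt_pos.mpr h8)
  field_simp
  ring

lemma F_one (y : ℝ) (hy : 0 < y) : F y 1 = 1 + 2 * y := by
  rw [F_eq y hy 1]
  have h8 : (0:ℝ) < 1 + 8 * y := by linarith
  have hs0 : Real.sqrt (1 + 8 * y) ≠ 0 := ne_of_gt (Real.sqrt_pos.mpr h8)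
  field_simp
  ring

lemma F_rec (y : ℝ) (hy : 0 < y) (n : ℕ) : F y (n + 2) = F y (n + 1) + 2 * y * F y n := by
  rw [F_eq y hy (n+2), F_eq y hy (n+1), F_eq y hy n]
  set s := Real.sqrt (1 + 8 * y) with hsdef
  have h8 : (0:ℝ) < 1 + 8 * y := by linarith
  have hs0 : s ≠ 0 := ne_of_gt (Real.sqrt_pos.mpr h8)
  have hs : s ^ 2 = 1 + 8 * y := Real.sq_sqrt h8.le
  set a := (1 + s) / 2 with hadef
  set b := (1 - s) / 2 with hbdef
  have ha : a ^ 2 = a + 2 * y := by rw [hadef]; linear_combination hs / 4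
  have hb : b ^ 2 = b + 2 * y := by rw [hbdef]; linear_combination hs / 4
  have key : a ^ (n + 3) - b ^ (n + 3) + 2 * y * (a ^ (n + 2) - b ^ (n + 2)) =
      (a ^ (n + 2) - b ^ (n + 2) + 2 * y * (a ^ (n + 1) - b ^ (n + 1))) +
      2 * y * (a ^ (n + 1) - b ^ (n + 1) + 2 * y * (a ^ n - b ^ n)) := by
    linear_combination (a ^ (n + 1) + 2 * y * a ^ n) * ha - (b ^ (n + 1) + 2 * y * b ^ n) * hb
  rw [show n + 2 + 1 = n + 3 from rfl, show n + 1 + 1 = n + 2 from rfl, key]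
  ring

noncomputable def G (y : ℝ) (n : ℕ) : ℝ :=
  ∑ k ∈ Finset.range (n + 1), (p n k : ℝ) * y ^ k

lemma G_zero (y : ℝ) : G y 0 = 1 := by
  simp [G, p_zero]

lemma G_one (y : ℝ) : G y 1 = 1 + 2 * y := by
  simp [G, Finset.sum_range_succ, p_zero, p_one_one]

lemma G_rec (y : ℝ) (n : ℕ) : G y (n + 2) = G y (n + 1) + 2 * y * G y n := by
  have step : ∀ k ∈ Finset.range (n + 2),
      (p (n + 2) (k + 1) : ℝ) * y ^ (k + 1) =
        (p (n + 1) (k + 1) : ℝ) * y ^ (k + 1) + 2 * y * ((p n k : ℝ) * y ^ k) := by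
    intro k _
    have := p_rec n k
    push_cast [this]
    ring
  calc G y (n + 2)
      = ∑ k ∈ Finset.range (n + 2 + 1), (p (n + 2) k : ℝ) * y ^ k := rfl
    _ = (∑ k ∈ Finset.range (n + 2), (p (n + 2) (k + 1) : ℝ) * y ^ (k + 1)) +
          (p (n + 2) 0 : ℝ) * y ^ 0 := Finset.sum_range_succ' _ _
    _ = (∑ k ∈ Finset.range (n + 2), ((p (n + 1) (k + 1) : ℝ) * y ^ (k + 1) +
          2 * y * ((p n k : ℝ) * y ^ k))) + (p (n + 2) 0 : ℝ) * y ^ 0 :=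
        congrArg (· + ((p (n + 2) 0 : ℝ) * y ^ 0)) (Finset.sum_congr rfl step)
    _ = ((∑ k ∈ Finset.range (n + 2), (p (n + 1) (k + 1) : ℝ) * y ^ (k + 1)) +
          (p (n + 1) 0 : ℝ) * y ^ 0) +
          2 * y * (∑ k ∈ Finset.range (n + 2), (p n k : ℝ) * y ^ k) := by
        rw [Finset.sum_add_distrib, Finset.mul_sum, p_zero, p_zero]
        ring
    _ = (∑ k ∈ Finset.range (n + 2 + 1), (p (n + 1) k : ℝ) * y ^ k) +
          2 * y * (∑ k ∈ Finset.range (n + 1 + 1), (p n k : ℝ) * y ^ k) := by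
        rw [Finset.sum_range_succ' (fun k => (p (n + 1) k : ℝ) * y ^ k) (n + 2)]
    _ = ((∑ k ∈ Finset.range (n + 2), (p (n + 1) k : ℝ) * y ^ k) +
          (p (n + 1) (n + 2) : ℝ) * y ^ (n + 2)) +
          2 * y * ((∑ k ∈ Finset.range (n + 1), (p n k : ℝ) * y ^ k) +
          (p n (n + 1) : ℝ) * y ^ (n + 1)) := by
        rw [Finset.sum_range_succ (fun k => (p (n + 1) k : ℝ) * y ^ k) (n + 2),
          Finset.sum_range_succ (fun k => (p n k : ℝ) * y ^ k) (n + 1)]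
    _ = G y (n + 1) + 2 * y * G y n := by
        rw [p_eq_zero (show n + 1 < n + 2 by omega), p_eq_zero (show n < n + 1 by omega)]
        show _ = (∑ k ∈ Finset.range (n + 1 + 1), (p (n + 1) k : ℝ) * y ^ k) +
          2 * y * (∑ k ∈ Finset.range (n + 1), (p n k : ℝ) * y ^ k)
        push_cast
        ring

/-- Closed form for `g_n(y) = Σ_{k≥0} p n k * y^k` for `y > 0`. -/
theorem kentucky_gn_closed_form (n : ℕ) (y : ℝ) (hy : 0 < y) :
    ∑' k : ℕ, (p n k : ℝ) * y ^ k =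
      (1 / (2 ^ (n + 1) * Real.sqrt (1 + 8 * y))) *
        (4 * y * (1 + Real.sqrt (1 + 8 * y)) ^ n - 4 * y * (1 - Real.sqrt (1 + 8 * y)) ^ n +
          (1 + Real.sqrt (1 + 8 * y)) ^ (n + 1) - (1 - Real.sqrt (1 + 8 * y)) ^ (n + 1)) := by
  have hsum : ∑' k : ℕ, (p n k : ℝ) * y ^ k = G y n := by
    refine tsum_eq_sum ?_
    intro k hk
    rw [Finset.mem_range, not_lt] at hk
    rw [p_eq_zero (show n < k by omega)]
    simp
  have main : ∀ m : ℕ, G y m = F y m ∧ G y (m + 1) = F y (m + 1) := by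
    intro m
    induction m with
    | zero => exact ⟨by rw [G_zero, F_zero y hy], by rw [G_one, F_one y hy]⟩
    | succ m ih => exact ⟨ih.2, by rw [G_rec, F_rec y hy, ih.1, ih.2]⟩
  rw [hsum, (main n).1]
  rfl
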